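/- arXiv:1805.10148 — 3 statements merged into one kernel-verified Lean document; each statement's English description precedes it below -/
import Mathlib

section
/- Let 0 < α < 1 and η ≥ 0 be real numbers, let γ = 2·sin(απ)·Γ(3/2)/π^{3/2} and p(ξ) = |ξ|^{(2α−1)/2}, and let U : [0,∞) → ℝ be continuous. For t ≥ 0 and ξ ∈ ℝ define φ(t,ξ) = p(ξ)·∫₀ᵗ exp(−(ξ² + η)(t − s))·U(s) ds (this is the unique solution of ∂ₜφ(t,ξ) + (ξ² + η)φ(t,ξ) = p(ξ)U(t) with φ(0,ξ) = 0). Then for every t ≥ 0 the output O(t) = γ·∫_ℝ p(ξ)·φ(t,ξ) dξ is a well-defined (absolutely convergent) Lebesgue integral and equals the exponentially modified fractional integral I^{1−α,η}U(t) = (1/Γ(1−α))·∫₀ᵗ (t − s)^{−α}·exp(−η(t − s))·U(s) ds. -/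
/-! Since `p(ξ)² = |ξ|^(2α-1)`, the Gaussian moment `∫ |ξ|^(2α-1) e^(-(t-s)ξ²) dξ = Γ(α) (t-s)^(-α)`
turns `∫ p φ` into `Γ(α) ∫ (t-s)^(-α) e^(-η(t-s)) U(s) ds` once the `ξ`- and `s`-integrals are
swapped; Tonelli applies because the same computation with `|U|` gives an integrable majorant,
`(t-s)^(-α)` being integrable for `α < 1`. Finally `Γ(3/2) = √π/2` and the reflection formula
`Γ(α) Γ(1-α) = π / sin(απ)` give `γ Γ(α) = 1 / Γ(1-α)`. -/

open MeasureTheory Real Set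

theorem integrable_comp_abs {E : Type*} [NormedAddCommGroup E] {f : ℝ → E}
    (hf : IntegrableOn f (Ioi 0)) : Integrable fun x => f |x| := by
  have hIoi : IntegrableOn (fun x => f |x|) (Ioi 0) :=
    hf.congr_fun (fun x hx => by rw [abs_of_pos hx]) measurableSet_Ioi
  have hIic : IntegrableOn (fun x => f |x|) (Iic 0) := by
    have hneg : MeasurableEmbedding fun x : ℝ => -x := (Homeomorph.neg ℝ).measurableEmbedding
    rw [← Measure.map_neg_eq_self (volume : Measure ℝ), hneg.integrableOn_map_iff]
    simp only [Function.comp_def, abs_neg, neg_preimage, neg_Iic, neg_zero]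
    exact (integrableOn_Ici_iff_integrableOn_Ioi).mpr hIoi
  rw [← integrableOn_univ, ← Iic_union_Ioi (a := (0 : ℝ))]
  exact hIic.union hIoi

theorem integrable_abs_rpow_mul_exp_neg_mul_sq {b c : ℝ} (hb : 0 < b) (hc : -1 < c) :
    Integrable fun x : ℝ => |x| ^ c * exp (-b * x ^ 2) := by
  simpa only [sq_abs] using
    integrable_comp_abs (f := fun x : ℝ => x ^ c * exp (-b * x ^ 2))
      (integrableOn_rpow_mul_exp_neg_mul_sq hb hc)

theorem integral_abs_rpow_mul_exp_neg_mul_sq {α b : ℝ} (hα : 0 < α) (hb : 0 < b) :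
    ∫ x : ℝ, |x| ^ (2 * α - 1) * exp (-b * x ^ 2) = Gamma α * b ^ (-α) := by
  have h := integral_comp_abs (f := fun x : ℝ => x ^ (2 * α - 1) * exp (-b * x ^ 2))
  have h' := integral_rpow_mul_exp_neg_mul_rpow two_pos (by linarith : -1 < 2 * α - 1) hb
  simp only [sq_abs, rpow_two] at h h'
  rw [h, h',
    show (2 * α - 1 + 1) / 2 = α by ring, show -(2 * α - 1 + 1) / 2 = -α by ring]
  ring

theorem Gamma_mul_sin_pi_mul_div_pi {s : ℝ} (hs : sin (π * s) ≠ 0) :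
    Gamma s * sin (π * s) / π = (Gamma (1 - s))⁻¹ := by
  refine eq_inv_of_mul_eq_one_left ?_
  rw [div_mul_eq_mul_div, mul_right_comm, Gamma_mul_Gamma_one_sub, div_mul_cancel₀ _ hs,
    div_self pi_ne_zero]

theorem two_mul_Gamma_three_halves_div_pi_rpow : 2 * Gamma (3 / 2) / π ^ (3 / 2 : ℝ) = π⁻¹ := by
  rw [show (3 / 2 : ℝ) = 1 / 2 + 1 by norm_num, Gamma_add_one (by norm_num), Gamma_one_half_eq,
    rpow_add pi_pos, rpow_one, ← sqrt_eq_rpow]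
  have : √π ≠ 0 := by positivity
  field_simp

theorem integrableOn_sub_rpow_neg_mul_of_continuousOn {α a t : ℝ} (hα : α < 1) {g : ℝ → ℝ}
    (hg : ContinuousOn g (Icc a t)) :
    IntegrableOn (fun s => (t - s) ^ (-α) * g s) (Ioo a t) := by
  have hrpow : IntervalIntegrable (fun s => (t - s) ^ (-α)) volume a t := by
    simpa using (intervalIntegral.intervalIntegrable_rpow' (a := t - a) (b := 0)
      (by linarith)).comp_sub_left t
  exact (hrpow.def'.mono_set (Ioo_subset_Ioc_self.trans Ioc_subset_uIoc)).mul_continuousOn_of_subset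
    hg measurableSet_Ioo isCompact_Icc Ioo_subset_Icc_self

theorem integral_integral_abs_rpow_mul_exp_neg_sub_mul_sq {α a t : ℝ} (hα : 0 < α) {g : ℝ → ℝ}
    (hg_meas : AEStronglyMeasurable g (volume.restrict (Ioo a t)))
    (hg : IntegrableOn (fun s => (t - s) ^ (-α) * g s) (Ioo a t)) :
    Integrable (fun ξ : ℝ => ∫ s in Ioo a t, |ξ| ^ (2 * α - 1) * exp (-(t - s) * ξ ^ 2) * g s) ∧
    ∫ ξ : ℝ, ∫ s in Ioo a t, |ξ| ^ (2 * α - 1) * exp (-(t - s) * ξ ^ 2) * g s =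
      Gamma α * ∫ s in Ioo a t, (t - s) ^ (-α) * g s := by
  set F : ℝ × ℝ → ℝ := fun q => |q.2| ^ (2 * α - 1) * exp (-(t - q.1) * q.2 ^ 2) * g q.1
  have hslice : ∀ s ∈ Ioo a t, ∀ y : ℝ,
      ∫ ξ : ℝ, |ξ| ^ (2 * α - 1) * exp (-(t - s) * ξ ^ 2) * y = Gamma α * ((t - s) ^ (-α) * y) := by
    intro s hs y
    rw [integral_mul_const, integral_abs_rpow_mul_exp_neg_mul_sq hα (sub_pos.2 hs.2), mul_assoc]
  have hF_meas : AEStronglyMeasurable F ((volume.restrict (Ioo a t)).prod volume) :=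
    (Measurable.aestronglyMeasurable (by fun_prop)).mul hg_meas.comp_fst
  have hF : Integrable F ((volume.restrict (Ioo a t)).prod volume) := by
    refine (integrable_prod_iff hF_meas).2 ⟨ae_restrict_of_forall_mem measurableSet_Ioo fun s hs =>
      (integrable_abs_rpow_mul_exp_neg_mul_sq (c := 2 * α - 1) (sub_pos.2 hs.2)
        (by linarith)).mul_const (g s), ?_⟩
    refine (hg.norm.const_mul (Gamma α)).congr ?_
    filter_upwards [ae_restrict_mem measurableSet_Ioo] with s hs
    simp only [F, Real.norm_eq_abs, abs_mul, abs_of_nonneg (rpow_nonneg (abs_nonneg _) _),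
      abs_of_pos (exp_pos _), abs_of_nonneg (rpow_nonneg (sub_pos.2 hs.2).le _)]
    exact (hslice s hs _).symm
  refine ⟨hF.integral_prod_right, ?_⟩
  rw [← integral_integral_swap hF, ← integral_const_mul]
  exact setIntegral_congr_fun measurableSet_Ioo fun s hs => hslice s hs (g s)

theorem stmt_0_general (α η : ℝ) (hα0 : 0 < α) (hα1 : α < 1)
    (U : ℝ → ℝ) (hU : ContinuousOn U (Set.Ici 0))
    (p : ℝ → ℝ) (hp : ∀ ξ : ℝ, p ξ = |ξ| ^ ((2 * α - 1) / 2))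
    (γ : ℝ) (hγ : γ = 2 * Real.sin (α * π) * Real.Gamma (3 / 2) / π ^ ((3 : ℝ) / 2))
    (φ : ℝ → ℝ → ℝ)
    (hφ : ∀ t ξ : ℝ, φ t ξ =
      p ξ * ∫ s in (0 : ℝ)..t, Real.exp (-(ξ ^ 2 + η) * (t - s)) * U s) :
    ∀ t : ℝ, 0 ≤ t →
      Integrable (fun ξ : ℝ => p ξ * φ t ξ) ∧
      γ * (∫ ξ : ℝ, p ξ * φ t ξ) =
        (1 / Real.Gamma (1 - α)) *
          ∫ s in (0 : ℝ)..t, (t - s) ^ (-α) * Real.exp (-η * (t - s)) * U s := by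
  intro t ht
  set g : ℝ → ℝ := fun s => exp (-η * (t - s)) * U s
  have hg : ContinuousOn g (Icc 0 t) :=
    (by fun_prop : Continuous fun s => exp (-η * (t - s))).continuousOn.mul
      (hU.mono Icc_subset_Ici_self)
  have hpφ : ∀ ξ, p ξ * φ t ξ =
      ∫ s in Ioo 0 t, |ξ| ^ (2 * α - 1) * exp (-(t - s) * ξ ^ 2) * g s := by
    intro ξ
    have hpp : p ξ * p ξ = |ξ| ^ (2 * α - 1) := by
      rw [hp, ← sq, ← rpow_mul_natCast (abs_nonneg ξ)]
      norm_num
    rw [hφ, ← mul_assoc, hpp, intervalIntegral.integral_of_le ht, integral_Ioc_eq_integral_Ioo,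
      ← integral_const_mul]
    refine setIntegral_congr_fun measurableSet_Ioo fun s _ => ?_
    rw [show -(ξ ^ 2 + η) * (t - s) = -(t - s) * ξ ^ 2 + -η * (t - s) by ring, exp_add]
    ring
  have hγ' : γ * Gamma α = 1 / Gamma (1 - α) := by
    have hsin : sin (π * α) ≠ 0 :=
      (sin_pos_of_pos_of_lt_pi (by positivity) (by nlinarith [pi_pos])).ne'
    rw [hγ, mul_comm α π, one_div, ← Gamma_mul_sin_pi_mul_div_pi hsin, div_eq_mul_inv _ π,
      ← two_mul_Gamma_three_halves_div_pi_rpow]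
    ring
  obtain ⟨hint, heq⟩ := integral_integral_abs_rpow_mul_exp_neg_sub_mul_sq hα0
    ((hg.mono Ioo_subset_Icc_self).aestronglyMeasurable measurableSet_Ioo)
    (integrableOn_sub_rpow_neg_mul_of_continuousOn hα1 hg)
  simp_rw [hpφ]
  refine ⟨hint, ?_⟩
  rw [heq, ← mul_assoc, hγ', intervalIntegral.integral_of_le ht, integral_Ioc_eq_integral_Ioo]
  simp only [g, mul_assoc]

/-- Proposition 2.1: the diffusive realization of the exponentially modified
fractional integral `I^{1-α,η}`. -/
theorem stmt_0 (α η : ℝ) (hα0 : 0 < α) (hα1 : α < 1) (hη : 0 ≤ η)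
    (U : ℝ → ℝ) (hU : ContinuousOn U (Set.Ici 0))
    (p : ℝ → ℝ) (hp : ∀ ξ : ℝ, p ξ = |ξ| ^ ((2 * α - 1) / 2))
    (γ : ℝ) (hγ : γ = 2 * Real.sin (α * π) * Real.Gamma (3 / 2) / π ^ ((3 : ℝ) / 2))
    (φ : ℝ → ℝ → ℝ)
    (hφ : ∀ t ξ : ℝ, φ t ξ =
      p ξ * ∫ s in (0 : ℝ)..t, Real.exp (-(ξ ^ 2 + η) * (t - s)) * U s) :
    ∀ t : ℝ, 0 ≤ t →
      Integrable (fun ξ : ℝ => p ξ * φ t ξ) ∧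
      γ * (∫ ξ : ℝ, p ξ * φ t ξ) =
        (1 / Real.Gamma (1 - α)) *
          ∫ s in (0 : ℝ)..t, (t - s) ^ (-α) * Real.exp (-η * (t - s)) * U s :=
  stmt_0_general α η hα0 hα1 U hU p hp γ hγ φ hφ
end

section
/- Let 0 < α < 1, η > 0 and ω ∈ ℝ with ω ≠ 0. Then ∫₀^∞ ρ^{2α−1} / ((ρ² + η)² + ω²) dρ = −π·Im((η + iω)^{α−1}) / (2·ω·sin(απ)), where (η + iω)^{α−1} denotes the principal-branch complex power and Im denotes the imaginary part. -/
/-!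
Substituting `t = ρ²` turns the integral into `½ ∫₀^∞ t^(α-1) / ((t + η)² + ω²) dt`, and
`1 / ((t + η)² + ω²) = Im (1 / (t + w)) / ω` with `w = η - iω = conj (η + iω)`. So everything
reduces to the Stieltjes transform `∫₀^∞ t^(s-1) / (t + z) dt = π z^(s-1) / sin (π s)` for
`Re z > 0`. For real `z = c > 0` this follows by scaling from `c = 1`, which the substitution
`x = t / (1 + t)` turns into the Beta integral `B(s, 1 - s) = Γ(s) Γ(1 - s) = π / sin (π s)`.
Both sides are holomorphic in `z` on the right half-plane, so the identity theorem extends the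
formula from the positive reals.
-/

open MeasureTheory Real Set Topology Filter

lemma integrableOn_rpow_div_add_pow {s ε : ℝ} {n : ℕ} (hs : 0 < s) (hsn : s < n) (hε : 0 < ε) :
    IntegrableOn (fun t : ℝ => t ^ (s - 1) / (t + ε) ^ n) (Ioi 0) := by
  have hmeas : AEStronglyMeasurable (fun t : ℝ => t ^ (s - 1) / (t + ε) ^ n) :=
    (by fun_prop : Measurable _).aestronglyMeasurable
  rw [← Ioc_union_Ioi_eq_Ioi zero_le_one, integrableOn_union]
  constructor
  · have hdom : IntegrableOn (fun t : ℝ => t ^ (s - 1) / ε ^ n) (Ioc 0 1) :=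
      ((intervalIntegrable_iff_integrableOn_Ioc_of_le zero_le_one).mp
        (intervalIntegral.intervalIntegrable_rpow' (by linarith))).div_const _
    refine hdom.mono' hmeas.restrict ?_
    filter_upwards [ae_restrict_mem measurableSet_Ioc] with t ⟨ht, _⟩
    rw [Real.norm_of_nonneg (by positivity)]
    gcongr
    linarith
  · have hdom : IntegrableOn (fun t : ℝ => t ^ (s - 1 - n)) (Ioi 1) :=
      integrableOn_Ioi_rpow_of_lt (by linarith) one_pos
    refine hdom.mono' hmeas.restrict ?_
    filter_upwards [ae_restrict_mem measurableSet_Ioi] with t (ht : 1 < t)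
    have ht0 : 0 < t := one_pos.trans ht
    rw [Real.norm_of_nonneg (by positivity), rpow_sub ht0 (s - 1), rpow_natCast]
    gcongr
    linarith

lemma integral_Ioo_rpow_mul_one_sub_rpow_neg {s : ℝ} (hs0 : 0 < s) (hs1 : s < 1) :
    ∫ x in Ioo (0 : ℝ) 1, x ^ (s - 1) * (1 - x) ^ (-s) = π / Real.sin (π * s) := by
  have hB := Complex.Gamma_mul_Gamma_eq_betaIntegral (s := s) (t := 1 - s)
    (by simpa using hs0) (by simpa using hs1)
  rw [add_sub_cancel, Complex.Gamma_one, one_mul, Complex.Gamma_mul_Gamma_one_sub] at hB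
  have hreal : Complex.betaIntegral s (1 - s) =
      ((∫ x in Ioo (0 : ℝ) 1, x ^ (s - 1) * (1 - x) ^ (-s) : ℝ) : ℂ) := by
    rw [Complex.betaIntegral, intervalIntegral.integral_of_le zero_le_one,
      integral_Ioc_eq_integral_Ioo, ← integral_complex_ofReal]
    refine setIntegral_congr_fun measurableSet_Ioo fun x ⟨hx0, hx1⟩ => ?_
    rw [Complex.ofReal_mul, Complex.ofReal_cpow hx0.le, Complex.ofReal_cpow (by linarith)]
    push_cast
    ring_nf
  rw [hreal] at hB
  exact_mod_cast hB.symm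

lemma integral_rpow_div_one_add {s : ℝ} (hs0 : 0 < s) (hs1 : s < 1) :
    ∫ t in Ioi (0 : ℝ), t ^ (s - 1) / (1 + t) = π / Real.sin (π * s) := by
  have hderiv : ∀ t ∈ Ioi (0 : ℝ),
      HasDerivWithinAt (fun t => t / (1 + t)) ((1 + t) ^ 2)⁻¹ (Ioi 0) t := by
    intro t (ht : 0 < t)
    have h : HasDerivAt (fun t : ℝ => t / (1 + t)) ((1 * (1 + t) - t * 1) / (1 + t) ^ 2) t :=
      (hasDerivAt_id' t).div ((hasDerivAt_id' t).const_add 1) (by positivity)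
    rw [show ((1 + t) ^ 2)⁻¹ = (1 * (1 + t) - t * 1) / (1 + t) ^ 2 by ring]
    exact h.hasDerivWithinAt
  have hinj : InjOn (fun t : ℝ => t / (1 + t)) (Ioi 0) := by
    intro a (ha : 0 < a) b (hb : 0 < b) hab
    field_simp at hab
    linarith
  have himage : (fun t : ℝ => t / (1 + t)) '' Ioi 0 = Ioo 0 1 := by
    ext y
    constructor
    · rintro ⟨t, ht : 0 < t, rfl⟩
      exact ⟨by positivity, (div_lt_one (by positivity)).2 (by linarith)⟩
    · rintro ⟨hy0, hy1⟩
      refine ⟨y / (1 - y), div_pos hy0 (sub_pos.2 hy1), ?_⟩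
      have : 1 - y ≠ 0 := (sub_pos.2 hy1).ne'
      field_simp
      ring
  have hsubst := integral_image_eq_integral_abs_deriv_smul measurableSet_Ioi hderiv hinj
    (fun x => x ^ (s - 1) * (1 - x) ^ (-s))
  rw [himage, integral_Ioo_rpow_mul_one_sub_rpow_neg hs0 hs1] at hsubst
  rw [hsubst]
  refine setIntegral_congr_fun measurableSet_Ioi fun t (ht : 0 < t) => ?_
  have hcompl : 1 - t / (1 + t) = (1 + t)⁻¹ := by field_simp; ring
  rw [abs_of_pos (by positivity), smul_eq_mul, hcompl, inv_rpow (by positivity),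
    rpow_neg (by positivity), inv_inv, div_rpow ht.le (by positivity),
    rpow_sub_one (by positivity : (1 + t) ≠ 0) s]
  field_simp

lemma integral_rpow_div_add {s c : ℝ} (hs0 : 0 < s) (hs1 : s < 1) (hc : 0 < c) :
    ∫ t in Ioi (0 : ℝ), t ^ (s - 1) / (t + c) = c ^ (s - 1) * (π / Real.sin (π * s)) := by
  have h := integral_comp_mul_left_Ioi (fun t => t ^ (s - 1) / (t + c)) 0 hc
  have hscaled : ∫ x in Ioi (0 : ℝ), (c * x) ^ (s - 1) / (c * x + c) =
      c⁻¹ * (c ^ (s - 1) * (π / Real.sin (π * s))) := by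
    rw [← integral_rpow_div_one_add hs0 hs1, ← integral_const_mul, ← integral_const_mul]
    refine setIntegral_congr_fun measurableSet_Ioi fun x (hx : 0 < x) => ?_
    rw [mul_rpow hc.le hx.le]
    field_simp
    ring
  rw [mul_zero, smul_eq_mul, hscaled] at h
  exact mul_left_cancel₀ (inv_ne_zero hc.ne') h.symm

lemma add_re_le_norm_ofReal_add {ε : ℝ} {z : ℂ} (hz : ε ≤ z.re) (t : ℝ) :
    t + ε ≤ ‖(t : ℂ) + z‖ :=
  (by simpa using hz : t + ε ≤ ((t : ℂ) + z).re).trans (Complex.re_le_norm _)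

lemma integrableOn_rpow_div_ofReal_add_pow {s : ℝ} {n : ℕ} {z : ℂ} (hs : 0 < s) (hsn : s < n)
    (hz : 0 < z.re) :
    IntegrableOn (fun t : ℝ => ((t ^ (s - 1) : ℝ) : ℂ) / ((t : ℂ) + z) ^ n) (Ioi 0) := by
  refine (integrableOn_rpow_div_add_pow hs hsn hz).mono'
    (by fun_prop : Measurable _).aestronglyMeasurable ?_
  filter_upwards [ae_restrict_mem measurableSet_Ioi] with t (ht : 0 < t)
  rw [norm_div, norm_pow, Complex.norm_of_nonneg (by positivity)]
  gcongr
  exact add_re_le_norm_ofReal_add le_rfl t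

lemma integrableOn_rpow_div_ofReal_add {s : ℝ} {z : ℂ} (hs0 : 0 < s) (hs1 : s < 1)
    (hz : 0 < z.re) :
    IntegrableOn (fun t : ℝ => ((t ^ (s - 1) : ℝ) : ℂ) / ((t : ℂ) + z)) (Ioi 0) := by
  simpa using integrableOn_rpow_div_ofReal_add_pow (n := 1) hs0 (by simpa using hs1) hz

noncomputable def rpowStieltjes (s : ℝ) (z : ℂ) : ℂ :=
  ∫ t in Ioi (0 : ℝ), ((t ^ (s - 1) : ℝ) : ℂ) / ((t : ℂ) + z)

lemma rpowStieltjes_ofReal {s c : ℝ} (hs0 : 0 < s) (hs1 : s < 1) (hc : 0 < c) :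
    rpowStieltjes s c = (π / Real.sin (π * s) : ℝ) * (c : ℂ) ^ ((s : ℂ) - 1) := by
  have hcpow : (c : ℂ) ^ ((s : ℂ) - 1) = ((c ^ (s - 1) : ℝ) : ℂ) := by
    rw [Complex.ofReal_cpow hc.le]; push_cast; rfl
  rw [rpowStieltjes, hcpow, ← Complex.ofReal_mul, mul_comm, ← integral_rpow_div_add hs0 hs1 hc,
    ← integral_complex_ofReal]
  push_cast
  rfl

lemma hasDerivAt_const_div_const_add {c a z : ℂ} (h : a + z ≠ 0) :
    HasDerivAt (fun z => c / (a + z)) (-(c / (a + z) ^ 2)) z := by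
  have hd := (hasDerivAt_const z c).div ((hasDerivAt_id' z).const_add a) h
  rwa [show (0 * (a + z) - c * 1) / (a + z) ^ 2 = -(c / (a + z) ^ 2) by ring] at hd

lemma differentiableOn_rpowStieltjes {s : ℝ} (hs0 : 0 < s) (hs1 : s < 1) :
    DifferentiableOn ℂ (rpowStieltjes s) {z | 0 < z.re} := by
  intro z₀ (hz₀ : 0 < z₀.re)
  set ε := z₀.re / 2 with hε_def
  have hε : 0 < ε := half_pos hz₀
  have hball : ∀ z ∈ Metric.ball z₀ ε, ε ≤ z.re := by
    intro z hz
    have := (Complex.abs_re_le_norm (z - z₀)).trans_lt (mem_ball_iff_norm.1 hz)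
    rw [Complex.sub_re, abs_lt] at this
    linarith
  have hs2 : s < (2 : ℕ) := by push_cast; linarith
  have hderiv : ∀ t ∈ Ioi (0 : ℝ), ∀ z ∈ Metric.ball z₀ ε,
      HasDerivAt (fun z => ((t ^ (s - 1) : ℝ) : ℂ) / ((t : ℂ) + z))
        (-(((t ^ (s - 1) : ℝ) : ℂ) / ((t : ℂ) + z) ^ 2)) z := fun t (ht : 0 < t) z hz =>
    hasDerivAt_const_div_const_add <| norm_pos_iff.1 <|
      (add_pos ht hε).trans_le (add_re_le_norm_ofReal_add (hball z hz) t)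
  have hbound : ∀ᵐ t ∂(volume.restrict (Ioi (0 : ℝ))), ∀ z ∈ Metric.ball z₀ ε,
      ‖-(((t ^ (s - 1) : ℝ) : ℂ) / ((t : ℂ) + z) ^ 2)‖ ≤ t ^ (s - 1) / (t + ε) ^ 2 := by
    filter_upwards [ae_restrict_mem measurableSet_Ioi] with t (ht : 0 < t) z hz
    rw [norm_neg, norm_div, norm_pow, Complex.norm_of_nonneg (by positivity)]
    gcongr
    exact add_re_le_norm_ofReal_add (hball z hz) t
  obtain ⟨-, h⟩ := hasDerivAt_integral_of_dominated_loc_of_deriv_le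
    (F := fun z (t : ℝ) => ((t ^ (s - 1) : ℝ) : ℂ) / ((t : ℂ) + z))
    (Metric.ball_mem_nhds z₀ hε)
    (Eventually.of_forall fun z => (by fun_prop : Measurable _).aestronglyMeasurable)
    (integrableOn_rpow_div_ofReal_add hs0 hs1 hz₀)
    (integrableOn_rpow_div_ofReal_add_pow hs0 hs2 hz₀).neg.aestronglyMeasurable
    hbound (integrableOn_rpow_div_add_pow hs0 hs2 hε)
    ((ae_restrict_mem measurableSet_Ioi).mono hderiv)
  exact h.differentiableAt.differentiableWithinAt

lemma rpowStieltjes_eq {s : ℝ} (hs0 : 0 < s) (hs1 : s < 1) {z : ℂ} (hz : 0 < z.re) :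
    rpowStieltjes s z = (π / Real.sin (π * s) : ℝ) * z ^ ((s : ℂ) - 1) := by
  have hU : IsOpen {z : ℂ | 0 < z.re} := isOpen_lt continuous_const Complex.continuous_re
  have hF := (differentiableOn_rpowStieltjes hs0 hs1).analyticOnNhd hU
  have hG : AnalyticOnNhd ℂ (fun z : ℂ => (π / Real.sin (π * s) : ℝ) * z ^ ((s : ℂ) - 1))
      {z : ℂ | 0 < z.re} :=
    ((differentiableOn_id.cpow_const fun z hz => Or.inl hz).const_mul _).analyticOnNhd hU
  have hreal : Tendsto ((↑) : ℝ → ℂ) (𝓝[>] 1) (𝓝[≠] 1) :=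
    tendsto_nhdsWithin_of_tendsto_nhds_of_eventually_within _
      ((Complex.continuous_ofReal.tendsto' 1 1 Complex.ofReal_one).mono_left nhdsWithin_le_nhds)
      (eventually_nhdsWithin_of_forall fun x (hx : 1 < x) => Complex.ofReal_ne_one.2 hx.ne')
  have hfreq : ∃ᶠ w in 𝓝[≠] (1 : ℂ), rpowStieltjes s w =
      (π / Real.sin (π * s) : ℝ) * w ^ ((s : ℂ) - 1) :=
    hreal.frequently (Eventually.frequently (eventually_nhdsWithin_of_forall
      fun c (hc : 1 < c) => rpowStieltjes_ofReal hs0 hs1 (one_pos.trans hc)))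
  exact hF.eqOn_of_preconnected_of_frequently_eq hG (convex_halfSpace_re_gt 0).isPreconnected
    (by simp) hfreq hz

lemma integral_Ioi_mul_comp_sq {E : Type*} [NormedAddCommGroup E] [NormedSpace ℝ E] (g : ℝ → E) :
    ∫ x in Ioi 0, x • g (x ^ 2) = (2 : ℝ)⁻¹ • ∫ y in Ioi 0, g y := by
  rw [← integral_comp_rpow_Ioi_of_pos (g := g) two_pos, ← integral_smul]
  refine setIntegral_congr_fun measurableSet_Ioi fun x _ => ?_
  rw [smul_smul]
  norm_num
  congr 1
  ring

lemma rpow_two_mul_sub_one {ρ : ℝ} (hρ : 0 < ρ) (a : ℝ) :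
    ρ ^ (2 * a - 1) = ρ * (ρ ^ 2) ^ (a - 1) := by
  rw [← rpow_natCast, ← rpow_mul hρ.le, show 2 * a - 1 = 1 + (2 : ℕ) * (a - 1) by push_cast; ring,
    rpow_add hρ, rpow_one]

lemma im_ofReal_div_ofReal_add_conj (r t : ℝ) (v : ℂ) :
    ((r : ℂ) / ((t : ℂ) + starRingEnd ℂ v)).im = v.im * (r / ((t + v.re) ^ 2 + v.im ^ 2)) := by
  rw [Complex.div_im, Complex.normSq_apply]
  simp only [Complex.ofReal_re, Complex.ofReal_im, Complex.add_re, Complex.add_im,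
    Complex.conj_re, Complex.conj_im]
  ring

/-- Lemma 7.2 written with the principal complex power. -/
theorem stmt_9 (α η ω : ℝ) (hα0 : 0 < α) (hα1 : α < 1) (hη : 0 < η) (hω : ω ≠ 0) :
    ∫ ρ in Set.Ioi (0 : ℝ), ρ ^ (2 * α - 1) / ((ρ ^ 2 + η) ^ 2 + ω ^ 2) =
      -π * (((η : ℂ) + Complex.I * (ω : ℂ)) ^ ((α : ℂ) - 1)).im /
        (2 * ω * Real.sin (α * π)) := by
  set v : ℂ := (η : ℂ) + Complex.I * ω
  have hvre : v.re = η := by simp [v]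
  have hvim : v.im = ω := by simp [v]
  have hv : 0 < v.re := hvre ▸ hη
  have hw : 0 < (starRingEnd ℂ v).re := by simpa using hv
  have hconj : starRingEnd ℂ v ^ ((α : ℂ) - 1) = starRingEnd ℂ (v ^ ((α : ℂ) - 1)) := by
    rw [Complex.conj_cpow v _ (Complex.mem_slitPlane_iff_arg.1 (Or.inl hv)).1]
    simp
  have hsq := integral_Ioi_mul_comp_sq fun t => t ^ (α - 1) / ((t + η) ^ 2 + ω ^ 2)
  beta_reduce at hsq
  have him : ∫ t in Ioi (0 : ℝ), (((t ^ (α - 1) : ℝ) : ℂ) / ((t : ℂ) + starRingEnd ℂ v)).im =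
      (rpowStieltjes α (starRingEnd ℂ v)).im :=
    integral_im (integrableOn_rpow_div_ofReal_add hα0 hα1 hw)
  simp only [im_ofReal_div_ofReal_add_conj, hvre, hvim] at him
  calc ∫ ρ in Ioi (0 : ℝ), ρ ^ (2 * α - 1) / ((ρ ^ 2 + η) ^ 2 + ω ^ 2)
      _ = ∫ ρ in Ioi (0 : ℝ), ρ • ((ρ ^ 2) ^ (α - 1) / ((ρ ^ 2 + η) ^ 2 + ω ^ 2)) :=
        setIntegral_congr_fun measurableSet_Ioi fun ρ hρ => by
          rw [rpow_two_mul_sub_one hρ, smul_eq_mul, mul_div_assoc]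
      _ = 2⁻¹ * (ω⁻¹ * (rpowStieltjes α (starRingEnd ℂ v)).im) := by
        rw [hsq, smul_eq_mul, ← him, integral_const_mul, inv_mul_cancel_left₀ hω]
      _ = _ := by
        rw [rpowStieltjes_eq hα0 hα1 hw, hconj, Complex.im_ofReal_mul,
          Complex.conj_im, mul_comm α π]
        field_simp
end

section
/- Let 0 < α < 1 and η > 0. Then there exists a constant C > 0 such that for every ω ∈ ℝ, ∫₀^∞ ρ^{2α−1} / ((ρ² + η)² + ω²) dρ ≤ C·(η² + ω²)^{(α−2)/2}. -/
/-!
Since `η ≥ 0`, the denominator dominates `ρ⁴ + s` with `s = η² + ω²`, and the substitution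
`ρ = s^{1/4} u` scales `∫₀^∞ ρ^{2α-1} / (ρ⁴ + s) dρ` to `s^{(α-2)/2}` times the same integral
with `s = 1`, which is finite because `-1 < 2α - 1 < 3`.
-/

open MeasureTheory Real Set

lemma integrableOn_Ioi_rpow_div_pow_add {p : ℝ} {k : ℕ} (hp : -1 < p) (hpk : p < k - 1)
    {s : ℝ} (hs : 0 < s) :
    IntegrableOn (fun u : ℝ => u ^ p / (u ^ k + s)) (Ioi 0) := by
  have hmeas : AEStronglyMeasurable (fun u : ℝ => u ^ p / (u ^ k + s)) :=
    (by fun_prop : Measurable fun u : ℝ => u ^ p / (u ^ k + s)).aestronglyMeasurable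
  rw [← Ioc_union_Ioi_eq_Ioi zero_le_one]
  refine IntegrableOn.union ?_ ?_
  · refine ((intervalIntegral.intervalIntegrable_rpow' hp).1.div_const s).mono'
      hmeas.restrict ?_
    filter_upwards [ae_restrict_mem measurableSet_Ioc] with u ⟨hu, _⟩
    rw [norm_of_nonneg (by positivity)]
    exact div_le_div_of_nonneg_left (by positivity) hs (by simp [hu.le])
  · refine (integrableOn_Ioi_rpow_of_lt (a := p - k) (by linarith) one_pos).mono'
      hmeas.restrict ?_
    filter_upwards [ae_restrict_mem measurableSet_Ioi] with u (hu : 1 < u)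
    rw [norm_of_nonneg (by positivity), rpow_sub_natCast (by positivity)]
    exact div_le_div_of_nonneg_left (by positivity) (by positivity) (by linarith)

lemma integral_Ioi_rpow_div_pow_add {k : ℕ} (hk : k ≠ 0) (p : ℝ) {s : ℝ} (hs : 0 < s) :
    ∫ u in Ioi (0 : ℝ), u ^ p / (u ^ k + s) =
      s ^ ((p + 1) / k - 1) * ∫ u in Ioi (0 : ℝ), u ^ p / (u ^ k + 1) := by
  set b := s ^ (k⁻¹ : ℝ)
  have hb : 0 < b := rpow_pos_of_pos hs _
  have hbk : b ^ k = s := rpow_inv_natCast_pow hs.le hk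
  have hscaled : ∫ u in Ioi (0 : ℝ), (b * u) ^ p / ((b * u) ^ k + s) =
      b ^ p / s * ∫ u in Ioi (0 : ℝ), u ^ p / (u ^ k + 1) := by
    rw [← integral_const_mul]
    refine setIntegral_congr_fun measurableSet_Ioi fun u (hu : 0 < u) => ?_
    rw [mul_rpow hb.le hu.le, mul_pow, hbk]
    field_simp
  have hexp : b * (b ^ p / s) = s ^ ((p + 1) / k - 1) := by
    rw [rpow_sub_one hs.ne', mul_div_assoc', mul_comm, ← rpow_add_one hb.ne', ← rpow_mul hs.le,
      inv_mul_eq_div]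
  have hsub := integral_comp_mul_left_Ioi' (fun u => u ^ p / (u ^ k + s)) 0 hb
  rw [mul_zero, smul_eq_mul, hscaled, ← mul_assoc, hexp] at hsub
  exact hsub.symm

/-- Uniform bound of order (η² + ω²)^{(α−2)/2} for the integral of Lemma 7.2. -/
theorem stmt_10 (α η : ℝ) (hα0 : 0 < α) (hα1 : α < 1) (hη : 0 < η) :
    ∃ C : ℝ, 0 < C ∧ ∀ ω : ℝ,
      (∫ ρ in Set.Ioi (0 : ℝ), ρ ^ (2 * α - 1) / ((ρ ^ 2 + η) ^ 2 + ω ^ 2)) ≤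
        C * (η ^ 2 + ω ^ 2) ^ ((α - 2) / 2) := by
  set J := ∫ u in Ioi (0 : ℝ), u ^ (2 * α - 1) / (u ^ 4 + 1)
  have hJ : 0 ≤ J := setIntegral_nonneg measurableSet_Ioi fun u (hu : 0 < u) => by positivity
  refine ⟨J + 1, by linarith, fun ω => ?_⟩
  have hs : 0 < η ^ 2 + ω ^ 2 := by positivity
  have hdom : ∀ ρ ∈ Ioi (0 : ℝ), ρ ^ (2 * α - 1) / ((ρ ^ 2 + η) ^ 2 + ω ^ 2) ≤
      ρ ^ (2 * α - 1) / (ρ ^ 4 + (η ^ 2 + ω ^ 2)) := fun ρ (hρ : 0 < ρ) =>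
    div_le_div_of_nonneg_left (by positivity) (by positivity) (by nlinarith [sq_nonneg ρ])
  calc (∫ ρ in Ioi (0 : ℝ), ρ ^ (2 * α - 1) / ((ρ ^ 2 + η) ^ 2 + ω ^ 2))
      ≤ ∫ ρ in Ioi (0 : ℝ), ρ ^ (2 * α - 1) / (ρ ^ 4 + (η ^ 2 + ω ^ 2)) :=
        integral_mono_of_nonneg
          (ae_restrict_of_forall_mem measurableSet_Ioi fun ρ (hρ : 0 < ρ) => by positivity)
          (integrableOn_Ioi_rpow_div_pow_add (by linarith) (by push_cast; linarith) hs)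
          (ae_restrict_of_forall_mem measurableSet_Ioi hdom)
    _ = (η ^ 2 + ω ^ 2) ^ ((α - 2) / 2) * J := by
        rw [integral_Ioi_rpow_div_pow_add four_ne_zero _ hs]
        congr 2
        push_cast
        ring
    _ ≤ (J + 1) * (η ^ 2 + ω ^ 2) ^ ((α - 2) / 2) := by
        nlinarith [rpow_nonneg hs.le ((α - 2) / 2)]
end
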